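/- arXiv:1505.02717 — 4 statements merged into one kernel-verified Lean document; each statement's English description precedes it below -/
import Mathlib

section
/- If sequences a_k and b_k satisfy linear recurrences with characteristic polynomials ∏_i (t−ρ_i)^{p_i} and ∏_j (t−σ_j)^{q_j} respectively, then the pointwise product a_k·b_k satisfies a linear recurrence with characteristic polynomial ∏_{i,j} (t − ρ_iσ_j)^{p_i+q_j−1}, where the product is over pairs (i,j) with p_i ≥ 1 and q_j ≥ 1. -/
/-! Let `S` be the shift of sequences, so that `a` satisfies the recurrence with characteristic
polynomial `χ` iff `χ(S) a = 0`. As the factors `(X - ρ i) ^ p i` are pairwise coprime, the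
solutions of their product are the sums of solutions of the single factors, and likewise for `b`.
So it suffices to take `x` killed by `(S - r) ^ (p + 1)` and `y` killed by `(S - g) ^ (q + 1)`.
The product rule `(S - r g) (x y) = ((S - r) x) (S y) + (r x) ((S - g) y)` lowers `p` in the first
term and `q` in the second, so induction on `p + q` gives `(S - r g) ^ (p + q + 1) (x y) = 0`. -/

open Polynomial Finset

/-- `a` satisfies the linear recurrence with monic characteristic polynomial `χ`. -/
def SatisfiesLinRec {K : Type*} [Field K] (a : ℕ → K) (χ : Polynomial K) : Prop :=
  ∀ k : ℕ, ∑ i ∈ Finset.range (χ.natDegree + 1), χ.coeff i * a (k + i) = 0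

open Function

namespace Polynomial

variable {R M : Type*} [CommRing R] [AddCommGroup M] [Module R M]

theorem ker_aeval_prod_eq_iSup {ι : Type*} [DecidableEq ι] (f : Module.End R M) (g : ι → R[X])
    (s : Finset ι) (hg : (s : Set ι).Pairwise (IsCoprime on g)) :
    LinearMap.ker (aeval f (∏ i ∈ s, g i)) = ⨆ i ∈ s, LinearMap.ker (aeval f (g i)) := by
  induction s using Finset.induction with
  | empty => simp [Module.End.one_eq_id]
  | @insert i s hi ih =>
    rw [coe_insert, Set.pairwise_insert] at hg
    have hcop : IsCoprime (g i) (∏ j ∈ s, g j) :=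
      IsCoprime.prod_right fun j hj => (hg.2 j hj (ne_of_mem_of_not_mem hj hi).symm).1
    rw [prod_insert hi, ← sup_ker_aeval_eq_ker_aeval_mul_of_coprime f hcop, ih hg.1,
      Finset.iSup_insert]

end Polynomial

namespace LinRec

variable (R : Type*) [CommRing R]

def shift : Module.End R (ℕ → R) := LinearMap.funLeft R R Nat.succ

noncomputable def solutions (P : R[X]) : Submodule R (ℕ → R) :=
  LinearMap.ker (aeval (shift R) P)

variable {R}

theorem mem_solutions {P : R[X]} {x : ℕ → R} :
    x ∈ solutions R P ↔ aeval (shift R) P x = 0 :=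
  LinearMap.mem_ker

@[simp]
theorem shift_apply (x : ℕ → R) (k : ℕ) : shift R x k = x (k + 1) := rfl

theorem shift_pow_apply (n : ℕ) (x : ℕ → R) (k : ℕ) : (shift R ^ n) x k = x (k + n) := by
  induction n generalizing x with
  | zero => rfl
  | succ n ih => rw [pow_succ, Module.End.mul_apply, ih]; rfl

theorem aeval_shift_apply (P : R[X]) (x : ℕ → R) (k : ℕ) :
    aeval (shift R) P x k = ∑ i ∈ range (P.natDegree + 1), P.coeff i * x (k + i) := by
  simp [aeval_eq_sum_range, shift_pow_apply]

theorem aeval_shift_X_sub_C_apply (c : R) (x : ℕ → R) (k : ℕ) :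
    aeval (shift R) (X - C c) x k = x (k + 1) - c * x k := by
  simp

theorem solutions_one : solutions R 1 = ⊥ := by
  ext x; simp [mem_solutions]

theorem solutions_mono {P Q : R[X]} (h : P ∣ Q) : solutions R P ≤ solutions R Q := by
  obtain ⟨T, rfl⟩ := h
  intro x hx
  rw [mem_solutions, mul_comm, aeval_mul, Module.End.mul_apply, mem_solutions.1 hx, map_zero]

theorem solutions_prod {ι : Type*} [Fintype ι] [DecidableEq ι] (g : ι → R[X])
    (hg : Pairwise (IsCoprime on g)) : solutions R (∏ i, g i) = ⨆ i, solutions R (g i) := by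
  simpa [solutions] using ker_aeval_prod_eq_iSup (shift R) g univ (hg.set_pairwise _)

theorem aeval_shift_X_sub_C_mul_mul (r g : R) (x y : ℕ → R) :
    aeval (shift R) (X - C (r * g)) (x * y) =
      aeval (shift R) (X - C r) x * shift R y + (r • x) * aeval (shift R) (X - C g) y := by
  ext k
  simp only [Pi.add_apply, Pi.mul_apply, Pi.smul_apply, smul_eq_mul, aeval_shift_X_sub_C_apply,
    shift_apply]
  ring

theorem shift_mem_solutions {P : R[X]} {x : ℕ → R} (hx : x ∈ solutions R P) :
    shift R x ∈ solutions R P := by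
  have hcomm : aeval (shift R) P * shift R = shift R * aeval (shift R) P := by
    simpa only [map_mul, aeval_X] using congrArg (aeval (shift R)) (X_mul (p := P)).symm
  rw [mem_solutions, ← Module.End.mul_apply, hcomm, Module.End.mul_apply, mem_solutions.1 hx,
    map_zero]

theorem aeval_shift_mem_solutions_of_mul {P Q : R[X]} {x : ℕ → R}
    (hx : x ∈ solutions R (P * Q)) :
    aeval (shift R) Q x ∈ solutions R P := by
  rw [mem_solutions, ← Module.End.mul_apply, ← aeval_mul]
  exact hx

theorem mul_mem_solutions_X_sub_C_pow {r g : R} {p q : ℕ} {x y : ℕ → R}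
    (hx : x ∈ solutions R ((X - C r) ^ (p + 1))) (hy : y ∈ solutions R ((X - C g) ^ (q + 1))) :
    x * y ∈ solutions R ((X - C (r * g)) ^ (p + q + 1)) := by
  induction hn : p + q generalizing p q x y with
  | zero =>
    obtain ⟨rfl, rfl⟩ : p = 0 ∧ q = 0 := by omega
    rw [zero_add, pow_one] at hx hy ⊢
    rw [mem_solutions, aeval_shift_X_sub_C_mul_mul, mem_solutions.1 hx, mem_solutions.1 hy]
    simp
  | succ n ih =>
    rw [pow_succ, mem_solutions, aeval_mul, Module.End.mul_apply, aeval_shift_X_sub_C_mul_mul]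
    refine mem_solutions.1 (add_mem ?_ ?_)
    · rcases p with _ | p
      · rw [zero_add, pow_one] at hx
        rw [mem_solutions.1 hx, zero_mul]
        exact zero_mem _
      · rw [pow_succ] at hx
        exact ih (p := p) (q := q) (aeval_shift_mem_solutions_of_mul hx) (shift_mem_solutions hy)
          (by omega)
    · rcases q with _ | q
      · rw [zero_add, pow_one] at hy
        rw [mem_solutions.1 hy, mul_zero]
        exact zero_mem _
      · rw [pow_succ] at hy
        exact ih (p := p) (q := q) (Submodule.smul_mem _ r hx)
          (aeval_shift_mem_solutions_of_mul hy) (by omega)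

theorem solutions_X_sub_C_pow_mul_le (r g : R) (p q : ℕ) :
    solutions R ((X - C r) ^ p) * solutions R ((X - C g) ^ q) ≤
      solutions R ((X - C (r * g)) ^ (p + q - 1)) := by
  rcases p with _ | p
  · simp [solutions_one]
  rcases q with _ | q
  · simp [solutions_one]
  rw [show p + 1 + (q + 1) - 1 = p + q + 1 by omega]
  exact Submodule.mul_le.2 fun x hx y hy => mul_mem_solutions_X_sub_C_pow hx hy

theorem satisfiesLinRec_iff_mem_solutions {K : Type*} [Field K] {a : ℕ → K} {χ : K[X]} :
    SatisfiesLinRec a χ ↔ a ∈ solutions K χ := by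
  simp [mem_solutions, funext_iff, aeval_shift_apply, SatisfiesLinRec]

end LinRec

open LinRec

theorem stmt_4_general {K : Type*} [Field K] (s u : ℕ) (ρ : Fin s → K) (σ : Fin u → K)
    (p : Fin s → ℕ) (q : Fin u → ℕ)
    (hρ : Function.Injective ρ) (hσ : Function.Injective σ)
    (a b : ℕ → K)
    (ha : SatisfiesLinRec a (∏ i : Fin s, ((X : K[X]) - C (ρ i)) ^ (p i)))
    (hb : SatisfiesLinRec b (∏ j : Fin u, ((X : K[X]) - C (σ j)) ^ (q j))) :
    SatisfiesLinRec (fun k => a k * b k)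
      (∏ ij ∈ Finset.univ.filter (fun ij : Fin s × Fin u => 1 ≤ p ij.1 ∧ 1 ≤ q ij.2),
        ((X : K[X]) - C (ρ ij.1 * σ ij.2)) ^ (p ij.1 + q ij.2 - 1)) := by
  rw [satisfiesLinRec_iff_mem_solutions] at ha hb ⊢
  rw [solutions_prod _ fun i j hij => (pairwise_coprime_X_sub_C hρ hij).pow] at ha
  rw [solutions_prod _ fun i j hij => (pairwise_coprime_X_sub_C hσ hij).pow] at hb
  refine (Submodule.mul_le.1 ?_) a ha b hb
  rw [Submodule.iSup_mul, iSup_le_iff]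
  intro i
  rw [Submodule.mul_iSup, iSup_le_iff]
  intro j
  by_cases hij : 1 ≤ p i ∧ 1 ≤ q j
  · have hmem : (i, j) ∈ univ.filter fun ij : Fin s × Fin u => 1 ≤ p ij.1 ∧ 1 ≤ q ij.2 :=
      mem_filter.2 ⟨mem_univ _, hij⟩
    have hdvd := dvd_prod_of_mem
      (fun ij : Fin s × Fin u => (X - C (ρ ij.1 * σ ij.2)) ^ (p ij.1 + q ij.2 - 1)) hmem
    exact (solutions_X_sub_C_pow_mul_le _ _ _ _).trans (solutions_mono hdvd)
  · obtain h | h : p i = 0 ∨ q j = 0 := by omega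
    all_goals simp [h, solutions_one]

/-- If `a` and `b` satisfy linear recurrences with characteristic polynomials
`∏ᵢ (t - ρ i)^(p i)` and `∏ⱼ (t - σ j)^(q j)` (distinct nonzero roots), then the pointwise
product satisfies the recurrence with characteristic polynomial
`∏_{i,j : p i ≥ 1, q j ≥ 1} (t - ρ i * σ j)^(p i + q j - 1)`. -/
theorem stmt_4 {K : Type*} [Field K] (s u : ℕ) (ρ : Fin s → K) (σ : Fin u → K)
    (p : Fin s → ℕ) (q : Fin u → ℕ)
    (hρ : Function.Injective ρ) (hσ : Function.Injective σ)
    (hρ0 : ∀ i, ρ i ≠ 0) (hσ0 : ∀ j, σ j ≠ 0)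
    (a b : ℕ → K)
    (ha : SatisfiesLinRec a (∏ i : Fin s, ((X : K[X]) - C (ρ i)) ^ (p i)))
    (hb : SatisfiesLinRec b (∏ j : Fin u, ((X : K[X]) - C (σ j)) ^ (q j))) :
    SatisfiesLinRec (fun k => a k * b k)
      (∏ ij ∈ Finset.univ.filter (fun ij : Fin s × Fin u => 1 ≤ p ij.1 ∧ 1 ≤ q ij.2),
        ((X : K[X]) - C (ρ ij.1 * σ ij.2)) ^ (p ij.1 + q ij.2 - 1)) :=
  stmt_4_general s u ρ σ p q hρ hσ a b ha hb
end

section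
/- If a sequence a_k satisfies a linear recurrence with characteristic polynomial ∏_i (t−ρ_i)^{p_i} (distinct nonzero ρ_i), then for any fixed positive integer s, the subsequence a_{sk} (k = 0,1,2,…) satisfies a linear recurrence with characteristic polynomial ∏_i (t − ρ_i^s)^{p_i}. -/
/-!
Write `S` for the shift `a ↦ (k ↦ a (k + 1))`; a sequence satisfies the recurrence with
characteristic polynomial `χ` exactly when `χ(S) a = 0`. The subsequence `k ↦ a (s k)` satisfies
the recurrence of `q` as soon as `q(S^s) a = 0`, and `q(S^s) = (q ∘ X^s)(S)`. Since `t - ρ`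
divides `t^s - ρ^s`, the polynomial `∏ (t - ρᵢ)^{pᵢ}` divides `∏ (t^s - ρᵢ^s)^{pᵢ}`, so the latter
also annihilates `a`.
-/

open Polynomial Finset

theorem prod_X_sub_C_pow_dvd_comp_X_pow {R ι : Type*} [CommRing R] (t : Finset ι)
    (ρ : ι → R) (p : ι → ℕ) (s : ℕ) :
    ∏ i ∈ t, (X - C (ρ i)) ^ p i ∣ (∏ i ∈ t, (X - C (ρ i ^ s)) ^ p i).comp (X ^ s) := by
  rw [Polynomial.prod_comp]
  refine prod_dvd_prod_of_dvd _ _ fun i _ => ?_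
  rw [pow_comp, sub_comp, X_comp, C_comp, C_pow]
  exact pow_dvd_pow_of_dvd (sub_dvd_pow_sub_pow _ _ s) _

section seqShift

variable (R : Type*) [CommSemiring R]

noncomputable def seqShift : Module.End R (ℕ → R) where
  toFun a k := a (k + 1)
  map_add' _ _ := rfl
  map_smul' _ _ := rfl

variable {R}

theorem seqShift_pow_apply (n : ℕ) (a : ℕ → R) (k : ℕ) :
    (seqShift R ^ n) a k = a (k + n) := by
  induction n generalizing k with
  | zero => rfl
  | succ n ih =>
    rw [pow_succ', Module.End.mul_apply]
    exact (ih (k + 1)).trans (by rw [add_comm n, add_assoc])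

theorem aeval_seqShift_pow_apply (q : R[X]) (e : ℕ) (a : ℕ → R) (k : ℕ) :
    aeval (seqShift R ^ e) q a k = ∑ i ∈ range (q.natDegree + 1), q.coeff i * a (k + e * i) := by
  simp only [aeval_eq_sum_range, LinearMap.coe_sum, Finset.sum_apply, LinearMap.smul_apply,
    Pi.smul_apply, smul_eq_mul, ← pow_mul, seqShift_pow_apply]

end seqShift

section SatisfiesLinRec

variable {K : Type*} [Field K] {a : ℕ → K}

theorem satisfiesLinRec_iff_aeval_seqShift {χ : K[X]} :
    SatisfiesLinRec a χ ↔ aeval (seqShift K) χ a = 0 := by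
  rw [funext_iff, ← pow_one (seqShift K)]
  simp only [aeval_seqShift_pow_apply, one_mul, Pi.zero_apply]
  rfl

theorem SatisfiesLinRec.of_dvd {χ ψ : K[X]} (ha : SatisfiesLinRec a χ) (h : χ ∣ ψ) :
    SatisfiesLinRec a ψ := by
  obtain ⟨φ, rfl⟩ := h
  rw [satisfiesLinRec_iff_aeval_seqShift] at ha ⊢
  rw [mul_comm, map_mul, Module.End.mul_apply, ha, map_zero]

theorem SatisfiesLinRec.comp_mul_of_comp_X_pow {q : K[X]} {s : ℕ}
    (ha : SatisfiesLinRec a (q.comp (X ^ s))) : SatisfiesLinRec (fun k => a (s * k)) q := by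
  intro k
  rw [satisfiesLinRec_iff_aeval_seqShift, aeval_comp, aeval_X_pow] at ha
  simpa only [aeval_seqShift_pow_apply, mul_add, Pi.zero_apply] using congrFun ha (s * k)

end SatisfiesLinRec

theorem stmt_5_general {K : Type*} [Field K] (m : ℕ) (ρ : Fin m → K) (p : Fin m → ℕ)
    (a : ℕ → K)
    (ha : SatisfiesLinRec a (∏ i : Fin m, ((X : K[X]) - C (ρ i)) ^ (p i)))
    (s : ℕ) :
    SatisfiesLinRec (fun k => a (s * k))
      (∏ i : Fin m, ((X : K[X]) - C (ρ i ^ s)) ^ (p i)) :=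
  (ha.of_dvd (prod_X_sub_C_pow_dvd_comp_X_pow _ ρ p s)).comp_mul_of_comp_X_pow

/-- If `a` satisfies a linear recurrence with characteristic polynomial `∏ᵢ (t - ρ i)^(p i)`
(distinct nonzero `ρ i`), then for any fixed positive integer `s`, the subsequence
`k ↦ a (s * k)` satisfies a linear recurrence with characteristic polynomial
`∏ᵢ (t - (ρ i)^s)^(p i)`. -/
theorem stmt_5 {K : Type*} [Field K] (m : ℕ) (ρ : Fin m → K) (p : Fin m → ℕ)
    (hdist : Function.Injective ρ) (hne : ∀ i, ρ i ≠ 0)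
    (a : ℕ → K)
    (ha : SatisfiesLinRec a (∏ i : Fin m, ((X : K[X]) - C (ρ i)) ^ (p i)))
    (s : ℕ) (hs : 0 < s)
    (hdist' : Function.Injective fun i => ρ i ^ s) :
    SatisfiesLinRec (fun k => a (s * k))
      (∏ i : Fin m, ((X : K[X]) - C (ρ i ^ s)) ^ (p i)) :=
  stmt_5_general m ρ p a ha s
end

section
/- Duplicating a column of a semi-standard augmented filling yields a semi-standard augmented filling; more precisely, if T is a filling with weakly decreasing rows in which no column contains two equal entries (in the same column or attacking positions), then inserting a copy of any column adjacent to itself creates no inversion triples among the duplicated pair of columns. -/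
theorem stmt_13_general (α : ℕ → ℕ) (T : ℕ → ℕ → ℕ) (c : ℕ)
    -- no column contains two equal entries
    (hcols : ∀ i i' j : ℕ, i ≠ i' → j ≤ α i → j ≤ α i' → T i j ≠ T i' j)
    -- columns `c` and `c + 1` are identical: same shape and same entries
    (hshape : ∀ i, c + 1 ≤ α i ↔ c ≤ α i)
    (hdup : ∀ i, c + 1 ≤ α i → T i c = T i (c + 1)) :
    -- no type A inversion triple with `a = (r, c)`, `b = (r, c+1)`, `c`-box `= (r', c+1)`:
    (∀ r r' : ℕ, c + 1 ≤ α r → c + 1 ≤ α r' → r < r' → α r' ≤ α r →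
      ¬(T r' (c + 1) ≤ T r c ∧ T r (c + 1) ≤ T r' (c + 1))) ∧
    -- no type B inversion triple with `a = (r, c)`, `b = (r, c+1)`, `c`-box `= (r'', c)`:
    (∀ r r'' : ℕ, c + 1 ≤ α r → c ≤ α r'' → r'' < r → α r'' < α r →
      ¬(T r'' c ≤ T r c ∧ T r (c + 1) ≤ T r'' c)) := by
  -- Since `T(a) = T(b)`, either triple pins the third entry to `T(a)`, repeating a column entry.
  refine ⟨?typeA, ?typeB⟩
  case typeA =>
    rintro r r' hr hr' hlt - ⟨hle, hge⟩
    rw [hdup r hr] at hle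
    exact hcols r r' (c + 1) hlt.ne hr hr' (le_antisymm hge hle)
  case typeB =>
    rintro r r'' hr hr'' hlt - ⟨hle, hge⟩
    rw [← hdup r hr] at hge
    exact hcols r'' r c hlt.ne hr'' ((hshape r).mp hr) (le_antisymm hle hge)

/-- An augmented filling is modelled by a shape `α` (row `i` occupies the boxes `(i, j)` with
`1 ≤ j ≤ α i`, together with the basement box `(i, 0)`) and an entry function `T`.  Suppose the
rows of `T` are weakly decreasing and no column of `T` contains two equal entries.  If columns
`c` and `c + 1` are identical (as after duplicating a column), then no inversion triple of
type `A` or of type `B` has its boxes `a`, `b` in these two identical columns. -/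
theorem stmt_13 (α : ℕ → ℕ) (T : ℕ → ℕ → ℕ) (c : ℕ)
    -- rows are weakly decreasing (including the basement column `j = 0`)
    (hrows : ∀ i j : ℕ, j + 1 ≤ α i → T i (j + 1) ≤ T i j)
    -- no column contains two equal entries
    (hcols : ∀ i i' j : ℕ, i ≠ i' → j ≤ α i → j ≤ α i' → T i j ≠ T i' j)
    -- columns `c` and `c + 1` are identical: same shape and same entries
    (hshape : ∀ i, c + 1 ≤ α i ↔ c ≤ α i)
    (hdup : ∀ i, c + 1 ≤ α i → T i c = T i (c + 1)) :
    -- no type A inversion triple with `a = (r, c)`, `b = (r, c+1)`, `c`-box `= (r', c+1)`: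
    (∀ r r' : ℕ, c + 1 ≤ α r → c + 1 ≤ α r' → r < r' → α r' ≤ α r →
      ¬(T r' (c + 1) ≤ T r c ∧ T r (c + 1) ≤ T r' (c + 1))) ∧
    -- no type B inversion triple with `a = (r, c)`, `b = (r, c+1)`, `c`-box `= (r'', c)`:
    (∀ r r'' : ℕ, c + 1 ≤ α r → c ≤ α r'' → r'' < r → α r'' < α r →
      ¬(T r'' c ≤ T r c ∧ T r (c + 1) ≤ T r'' c)) :=
  stmt_13_general α T c hcols hshape hdup
end

section
/- Let β = (β_1,…,β_n) be a column of distinct positive integers and c = (c_1,…,c_n) a multiset of positive integers with distinct entries such that there is a bijective matching with β_i ≥ c_i for all i. Then there is exactly one arrangement of the entries c_1,…,c_n into a column to the right of β such that every row is weakly decreasing and there is no triple of boxes a (left column), b (right column, same row as a), c (right column, below b) with T(a) ≥ T(c) ≥ T(b). -/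
/-!
Existence is an exchange argument: among the arrangements with weakly decreasing rows (there is
one by the matching), take one whose right column is lexicographically largest. An inversion
triple in rows `i < j` means `c (σ i) < c (σ j) ≤ β i`, so exchanging the two right entries keeps
the rows decreasing and makes the column lexicographically larger.

Uniqueness: at the first row `i` where two triple-free arrangements `σ, τ` differ, the entry
`τ i` sits strictly lower in `σ`; since it fits next to `β i`, triple-freeness of `σ` forces
`c (τ i) < c (σ i)`, and symmetrically `c (σ i) < c (τ i)`.
-/

open Equiv

variable {ι α : Type*} [LinearOrder ι] [LinearOrder α]

def IsTripleFreeFilling (β c : ι → α) (σ : Perm ι) : Prop :=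
  (∀ i, c (σ i) ≤ β i) ∧ ∀ i j, i < j → ¬(c (σ j) ≤ β i ∧ c (σ i) ≤ c (σ j))

section Existence

variable {β c : ι → α} {σ : Perm ι} {i j : ι}

lemma forall_apply_mul_swap_le (hσ : ∀ k, c (σ k) ≤ β k) (hi : c (σ j) ≤ β i)
    (hj : c (σ i) ≤ c (σ j)) : ∀ k, c ((σ * swap i j) k) ≤ β k := by
  intro k
  rcases eq_or_ne k i with rfl | hki
  · simpa using hi
  rcases eq_or_ne k j with rfl | hkj
  · simpa using hj.trans (hσ k)
  · simpa [swap_apply_of_ne_of_ne hki hkj] using hσ k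

lemma toLex_comp_lt_comp_mul_swap (hij : i < j) (h : c (σ i) < c (σ j)) :
    toLex (c ∘ σ) < toLex (c ∘ (σ * swap i j)) := by
  have := Pi.lex_desc (f := c ∘ (σ * swap i j)) hij.le (by simpa using h)
  simpa [Function.comp_assoc, ← Perm.coe_mul, mul_assoc] using this

theorem exists_isTripleFreeFilling [Fintype ι] (hc : Function.Injective c)
    (hmatch : ∃ τ : Perm ι, ∀ i, c (τ i) ≤ β i) : ∃ σ, IsTripleFreeFilling β c σ := by
  classical
  obtain ⟨τ, hτ⟩ := hmatch
  obtain ⟨σ, hσ, hmax⟩ := Finset.exists_max_image {σ : Perm ι | ∀ i, c (σ i) ≤ β i}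
    (fun σ => toLex (c ∘ σ)) ⟨τ, by simpa using hτ⟩
  simp only [Finset.mem_filter, Finset.mem_univ, true_and] at hσ hmax
  refine ⟨σ, hσ, fun i j hij ⟨hi, hj⟩ => ?_⟩
  have hlt : c (σ i) < c (σ j) := hj.lt_of_ne (hc.ne (σ.injective.ne hij.ne))
  exact (hmax _ (forall_apply_mul_swap_le hσ hi hj)).not_gt (toLex_comp_lt_comp_mul_swap hij hlt)

end Existence

section Uniqueness

variable {β c : ι → α} {σ τ : Perm ι}

lemma apply_le_of_eqOn_lt {i : ι} (hσ : IsTripleFreeFilling β c σ)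
    (hτ : IsTripleFreeFilling β c τ) (hagree : ∀ k < i, σ k = τ k) : c (τ i) ≤ c (σ i) := by
  obtain ⟨j, hσj⟩ : ∃ j, σ j = τ i := ⟨_, σ.apply_symm_apply _⟩
  rcases lt_trichotomy j i with hji | rfl | hij
  · exact absurd (τ.injective ((hagree j hji).symm.trans hσj)) hji.ne
  · rw [hσj]
  · rw [← hσj]
    exact le_of_not_ge fun h => hσ.2 i j hij ⟨hσj ▸ hτ.1 i, h⟩

theorem IsTripleFreeFilling.eq [WellFoundedLT ι] (hc : Function.Injective c)
    (hσ : IsTripleFreeFilling β c σ) (hτ : IsTripleFreeFilling β c τ) : σ = τ := by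
  ext1 i
  induction i using WellFoundedLT.induction with
  | ind i ih =>
    exact hc (le_antisymm (apply_le_of_eqOn_lt hτ hσ fun k hk => (ih k hk).symm)
      (apply_le_of_eqOn_lt hσ hτ ih))

end Uniqueness

theorem stmt_14_general (n : ℕ) (β : Fin n → ℕ) (c : Fin n → ℕ)
    (hc : Function.Injective c)
    (hmatch : ∃ τ : Equiv.Perm (Fin n), ∀ i, c (τ i) ≤ β i) :
    ∃! σ : Equiv.Perm (Fin n),
      (∀ i, c (σ i) ≤ β i) ∧
        ∀ i j : Fin n, i < j → ¬(c (σ j) ≤ β i ∧ c (σ i) ≤ c (σ j)) :=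
  existsUnique_of_exists_of_unique (exists_isTripleFreeFilling hc hmatch)
    fun _ _ => IsTripleFreeFilling.eq hc

/-- Let `β` be a basement column of `n` distinct entries and `c₁, …, cₙ` distinct entries
admitting a bijective matching `τ` with `c (τ i) ≤ β i` for all `i`.  Then there is exactly
one arrangement `σ` of the entries into the column to the right of `β` (row `i` receiving
`c (σ i)`) such that rows are weakly decreasing and there is no type A inversion triple,
i.e. no rows `i < j` with `c (σ i) ≤ c (σ j) ≤ β i`. -/
theorem stmt_14 (n : ℕ) (β : Fin n → ℕ) (c : Fin n → ℕ)
    (hβ : Function.Injective β) (hc : Function.Injective c)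
    (hmatch : ∃ τ : Equiv.Perm (Fin n), ∀ i, c (τ i) ≤ β i) :
    ∃! σ : Equiv.Perm (Fin n),
      (∀ i, c (σ i) ≤ β i) ∧
        ∀ i j : Fin n, i < j → ¬(c (σ j) ≤ β i ∧ c (σ i) ≤ c (σ j)) :=
  stmt_14_general n β c hc hmatch
end
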